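/- arXiv:1603.04321 — 3 statements merged into one kernel-verified Lean document; each statement's English description precedes it below -/
import Mathlib

section
/- Given a continuous function N : [0,∞) → ℝ and λ > 0, let z : [0,∞) → ℝ be continuously differentiable with z'(t) = −λ² ∫₀ᵗ N(t−s) z(s) ds and z(0) = 1. Let g : [0,∞) → ℝ be continuous and f₁(t) = ∫₀ᵗ g(s) ds. Then for every t ≥ 0, ∫₀ᵗ f₁(s) ( ∫₀^{t−s} N(t−s−r) z(r) dr ) ds = (1/λ²) ( f₁(t) − ∫₀ᵗ g(s) z(t−s) ds ). -/
open MeasureTheory Set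

/-- If `z` solves `z'(t) = -λ² ∫₀ᵗ N(t-s) z(s) ds`, `z(0) = 1`, and
`f₁(t) = ∫₀ᵗ g(s) ds`, then
`∫₀ᵗ f₁(s) (∫₀^{t-s} N(t-s-r) z(r) dr) ds = (1/λ²)(f₁(t) - ∫₀ᵗ g(s) z(t-s) ds)`. -/
theorem convolution_identity_for_volterra_solution
    (N : ℝ → ℝ) (hN : ContinuousOn N (Set.Ici 0))
    (lam : ℝ) (hlam : 0 < lam)
    (z z' : ℝ → ℝ) (hz'c : ContinuousOn z' (Set.Ici 0))
    (hz : ∀ s ∈ Set.Ici (0:ℝ), HasDerivWithinAt z (z' s) (Set.Ici 0) s)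
    (hzeq : ∀ t ∈ Set.Ici (0:ℝ),
      z' t = -lam ^ 2 * ∫ s in (0:ℝ)..t, N (t - s) * z s)
    (hz0 : z 0 = 1)
    (g : ℝ → ℝ) (hg : ContinuousOn g (Set.Ici 0))
    (f₁ : ℝ → ℝ) (hf₁ : ∀ t, f₁ t = ∫ s in (0:ℝ)..t, g s)
    (t : ℝ) (ht : 0 ≤ t) :
    ∫ s in (0:ℝ)..t, f₁ s * (∫ r in (0:ℝ)..(t - s), N (t - s - r) * z r)
      = (1 / lam ^ 2) * (f₁ t - ∫ s in (0:ℝ)..t, g s * z (t - s)) := by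
  have hlam2 : (lam : ℝ) ^ 2 ≠ 0 := by positivity
  have hzc : ContinuousOn z (Ici 0) := fun s hs => (hz s hs).continuousWithinAt
  have hsub : Icc (0:ℝ) t ⊆ Ici 0 := Icc_subset_Ici_self
  have huIcc : uIcc (0:ℝ) t = Icc 0 t := uIcc_of_le ht
  have hmap : ∀ s ∈ Icc (0:ℝ) t, t - s ∈ Icc (0:ℝ) t := fun s hs =>
    ⟨by linarith [hs.2], by linarith [hs.1]⟩
  -- continuity of the various pieces on [0, t]
  have hgc : ContinuousOn g (Icc 0 t) := hg.mono hsub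
  have hsubmap : ContinuousOn (fun s : ℝ => t - s) (Icc 0 t) :=
    (continuousOn_const.sub continuousOn_id)
  have hzcomp : ContinuousOn (fun s => z (t - s)) (Icc 0 t) :=
    hzc.comp hsubmap (fun s hs => hsub (hmap s hs))
  have hz'comp : ContinuousOn (fun s => z' (t - s)) (Icc 0 t) :=
    (hz'c.mono hsub).comp hsubmap (fun s hs => hmap s hs)
  have hf₁c : ContinuousOn f₁ (Icc 0 t) := by
    have h0 : IntegrableOn g (uIcc 0 t) := by
      rw [huIcc]; exact hgc.integrableOn_compact isCompact_Icc
    have := (intervalIntegral.continuousOn_primitive_interval h0)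
    rw [huIcc] at this
    exact this.congr (fun s _ => (hf₁ s))
  -- F and its derivative F'
  set F : ℝ → ℝ := fun s => f₁ s * z (t - s) with hF
  set F' : ℝ → ℝ := fun s => g s * z (t - s) - f₁ s * z' (t - s) with hF'
  have hFc : ContinuousOn F (Icc 0 t) := hf₁c.mul hzcomp
  have hF'c : ContinuousOn F' (Icc 0 t) := (hgc.mul hzcomp).sub (hf₁c.mul hz'comp)
  have hF'int : IntervalIntegrable F' volume 0 t := by
    apply ContinuousOn.intervalIntegrable; rwa [huIcc]
  have hderiv : ∀ s ∈ Ioo (0:ℝ) t, HasDerivWithinAt F (F' s) (Ioi s) s := by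
    intro s hs
    have hs0 : (0:ℝ) < s := hs.1
    have hts : (0:ℝ) < t - s := by linarith [hs.2]
    -- f₁ has derivative g s at s
    have hgint : IntervalIntegrable g volume 0 s :=
      (hg.mono (fun x hx => by
        rw [uIcc_of_le hs0.le] at hx; exact hx.1)).intervalIntegrable
    have hgm : StronglyMeasurableAtFilter g (nhds s) volume :=
      (hg.mono (Ioi_subset_Ici le_rfl)).stronglyMeasurableAtFilter isOpen_Ioi s hs0
    have hgca : ContinuousAt g s := hg.continuousAt (Ici_mem_nhds hs0)
    have hderf₁ : HasDerivAt f₁ (g s) s := by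
      have := intervalIntegral.integral_hasDerivAt_right hgint hgm hgca
      exact this.congr_of_eventuallyEq (Filter.Eventually.of_forall (fun u => (hf₁ u)))
    -- z(t - ·) has derivative - z'(t-s)
    have hderz : HasDerivAt z (z' (t - s)) (t - s) :=
      (hz (t - s) (le_of_lt hts)).hasDerivAt (Ici_mem_nhds hts)
    have hsubder : HasDerivAt (fun x : ℝ => t - x) (-1) s := by
      simpa using (hasDerivAt_id s).const_sub t
    have hcomp : HasDerivAt (fun x => z (t - x)) (z' (t - s) * (-1)) s :=
      HasDerivAt.comp s hderz hsubder
    have : HasDerivAt F (g s * z (t - s) + f₁ s * (z' (t - s) * (-1))) s :=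
      hderf₁.mul hcomp
    have hEq : g s * z (t - s) + f₁ s * (z' (t - s) * (-1)) = F' s := by
      simp only [hF']; ring
    rw [hEq] at this
    exact this.hasDerivWithinAt
  have hFTC : ∫ s in (0:ℝ)..t, F' s = F t - F 0 :=
    intervalIntegral.integral_eq_sub_of_hasDeriv_right_of_le ht hFc hderiv hF'int
  have hf₁0 : f₁ 0 = 0 := by rw [hf₁ 0, intervalIntegral.integral_same]
  have hFt : F t - F 0 = f₁ t := by
    simp only [hF, sub_self, hz0, hf₁0]; ring
  -- split the integral of F'
  have hint1 : IntervalIntegrable (fun s => g s * z (t - s)) volume 0 t := by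
    apply ContinuousOn.intervalIntegrable; rw [huIcc]; exact hgc.mul hzcomp
  have hint2 : IntervalIntegrable (fun s => f₁ s * z' (t - s)) volume 0 t := by
    apply ContinuousOn.intervalIntegrable; rw [huIcc]; exact hf₁c.mul hz'comp
  have hsplit : ∫ s in (0:ℝ)..t, F' s
      = (∫ s in (0:ℝ)..t, g s * z (t - s)) - ∫ s in (0:ℝ)..t, f₁ s * z' (t - s) :=
    intervalIntegral.integral_sub hint1 hint2
  have hkey : ∫ s in (0:ℝ)..t, f₁ s * z' (t - s)
      = (∫ s in (0:ℝ)..t, g s * z (t - s)) - f₁ t := by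
    rw [hsplit, hFt] at hFTC; linarith
  -- rewrite the left-hand side using the Volterra equation
  have hcong : EqOn (fun s => f₁ s * (∫ r in (0:ℝ)..(t - s), N (t - s - r) * z r))
      (fun s => -(1 / lam ^ 2) * (f₁ s * z' (t - s))) (uIcc 0 t) := by
    intro s hs
    rw [huIcc] at hs
    have h1 : z' (t - s) = -lam ^ 2 * ∫ r in (0:ℝ)..(t - s), N (t - s - r) * z r :=
      hzeq (t - s) (hmap s hs).1
    have h2 : (∫ r in (0:ℝ)..(t - s), N (t - s - r) * z r) = -(1 / lam ^ 2) * z' (t - s) := by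
      rw [h1]; field_simp
    simp only
    rw [h2]; ring
  rw [intervalIntegral.integral_congr hcong, intervalIntegral.integral_const_mul, hkey]
  ring
end

section
/- Given a continuous function N : [0,∞) → ℝ and λ > 0, let z : [0,∞) → ℝ be continuously differentiable with z'(t) = −λ² ∫₀ᵗ N(t−s) z(s) ds and z(0) = 1. Let F : [0,∞) → ℝ be continuous and define θ(t) = ∫₀ᵗ z(t−r) F(r) dr. Then θ is continuously differentiable, θ(0) = 0, and θ'(t) = −λ² ∫₀ᵗ N(t−s) θ(s) ds + F(t) for every t ≥ 0. (Variation of constants formula for the Volterra equation with memory kernel N.) -/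
open MeasureTheory Set

lemma fubini_triangle (f : ℝ → ℝ → ℝ) (hf : Continuous (Function.uncurry f))
    {t : ℝ} (ht : 0 ≤ t) :
    (∫ s in (0:ℝ)..t, (∫ r in (0:ℝ)..s, f s r)) =
      ∫ r in (0:ℝ)..t, (∫ s in r..t, f s r) := by
  set S : Set (ℝ × ℝ) := {p | p.2 ≤ p.1} with hSdef
  have hS : MeasurableSet S := measurableSet_le measurable_snd measurable_fst
  set H : ℝ → ℝ → ℝ := fun s r => S.indicator (Function.uncurry f) (s, r) with hHdef
  have hint : Integrable (Function.uncurry H)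
      ((volume.restrict (Ioc 0 t)).prod (volume.restrict (Ioc 0 t))) := by
    rw [Measure.prod_restrict, ← Measure.volume_eq_prod]
    have h1 : IntegrableOn (Function.uncurry f) (Icc 0 t ×ˢ Icc 0 t) volume :=
      hf.continuousOn.integrableOn_compact (isCompact_Icc.prod isCompact_Icc)
    have h2 : IntegrableOn (S.indicator (Function.uncurry f)) (Icc 0 t ×ˢ Icc 0 t) volume :=
      h1.indicator hS
    have h3 := h2.mono_set (Set.prod_mono Ioc_subset_Icc_self Ioc_subset_Icc_self)
    exact h3.congr_fun (fun p _ => rfl) (measurableSet_Ioc.prod measurableSet_Ioc)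
  have swap := MeasureTheory.integral_integral_swap hint
  have hL : (∫ s in (0:ℝ)..t, (∫ r in (0:ℝ)..s, f s r)) =
      ∫ s in Ioc (0:ℝ) t, (∫ r in Ioc (0:ℝ) t, H s r) := by
    rw [intervalIntegral.integral_of_le ht]
    apply setIntegral_congr_fun measurableSet_Ioc
    intro s hs
    show (∫ r in (0:ℝ)..s, f s r) = ∫ r in Ioc (0:ℝ) t, H s r
    have e1 : (∫ r in Ioc (0:ℝ) t, H s r) = ∫ r in Ioc (0:ℝ) t, (Iic s).indicator (f s) r := by
      apply setIntegral_congr_fun measurableSet_Ioc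
      intro r _
      by_cases h : r ≤ s <;> simp [hHdef, hSdef, Set.indicator_apply, h, Function.uncurry]
    rw [e1, setIntegral_indicator measurableSet_Iic, Set.Ioc_inter_Iic,
      min_eq_right hs.2, intervalIntegral.integral_of_le hs.1.le]
  have hR : (∫ r in (0:ℝ)..t, (∫ s in r..t, f s r)) =
      ∫ r in Ioc (0:ℝ) t, (∫ s in Ioc (0:ℝ) t, H s r) := by
    rw [intervalIntegral.integral_of_le ht]
    apply setIntegral_congr_fun measurableSet_Ioc
    intro r hr
    show (∫ s in r..t, f s r) = ∫ s in Ioc (0:ℝ) t, H s r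
    have e1 : (∫ s in Ioc (0:ℝ) t, H s r)
        = ∫ s in Ioc (0:ℝ) t, (Ici r).indicator (fun s => f s r) s := by
      apply setIntegral_congr_fun measurableSet_Ioc
      intro s _
      by_cases h : r ≤ s <;> simp [hHdef, hSdef, Set.indicator_apply, h, Function.uncurry]
    have hset : Ioc (0:ℝ) t ∩ Ici r = Icc r t := by
      ext x
      simp only [mem_inter_iff, mem_Ioc, mem_Ici, mem_Icc]
      constructor
      · rintro ⟨⟨_, h2⟩, h3⟩; exact ⟨h3, h2⟩
      · rintro ⟨h3, h2⟩; exact ⟨⟨lt_of_lt_of_le hr.1 h3, h2⟩, h3⟩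
    rw [e1, setIntegral_indicator measurableSet_Ici, hset,
      integral_Icc_eq_integral_Ioc, intervalIntegral.integral_of_le hr.2]
  rw [hL, hR, swap]

/-- Variation of constants formula: if `z` solves
`z'(t) = -λ² ∫₀ᵗ N(t-s) z(s) ds`, `z(0) = 1`, `F` is continuous and
`θ(t) = ∫₀ᵗ z(t-r) F(r) dr`, then `θ` is continuously differentiable, `θ(0) = 0` and
`θ'(t) = -λ² ∫₀ᵗ N(t-s) θ(s) ds + F(t)` for `t ≥ 0`. -/
theorem variation_of_constants_volterra
    (N : ℝ → ℝ) (hN : ContinuousOn N (Set.Ici 0))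
    (lam : ℝ) (hlam : 0 < lam)
    (z z' : ℝ → ℝ) (hz'c : ContinuousOn z' (Set.Ici 0))
    (hz : ∀ s ∈ Set.Ici (0:ℝ), HasDerivWithinAt z (z' s) (Set.Ici 0) s)
    (hzeq : ∀ t ∈ Set.Ici (0:ℝ),
      z' t = -lam ^ 2 * ∫ s in (0:ℝ)..t, N (t - s) * z s)
    (hz0 : z 0 = 1)
    (F : ℝ → ℝ) (hF : ContinuousOn F (Set.Ici 0))
    (θ : ℝ → ℝ) (hθ : ∀ t, θ t = ∫ r in (0:ℝ)..t, z (t - r) * F r) :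
    ∃ θ' : ℝ → ℝ, ContinuousOn θ' (Set.Ici 0) ∧
      (∀ t ∈ Set.Ici (0:ℝ), HasDerivWithinAt θ (θ' t) (Set.Ici 0) t) ∧
      θ 0 = 0 ∧
      ∀ t ∈ Set.Ici (0:ℝ),
        θ' t = -lam ^ 2 * (∫ s in (0:ℝ)..t, N (t - s) * θ s) + F t := by
  have hm : Continuous (fun x : ℝ => max x 0) := continuous_id.max continuous_const
  have hmem : ∀ x : ℝ, max x 0 ∈ Ici (0:ℝ) := fun x => le_max_right x 0
  have hmax : ∀ x : ℝ, 0 ≤ x → max x 0 = x := fun x hx => max_eq_left hx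
  have hzc : ContinuousOn z (Ici 0) := fun s hs => (hz s hs).continuousWithinAt
  set Z : ℝ → ℝ := fun x => z (max x 0) with hZdef
  set Z' : ℝ → ℝ := fun x => z' (max x 0) with hZ'def
  set Fe : ℝ → ℝ := fun x => F (max x 0) with hFedef
  set Ne' : ℝ → ℝ := fun x => N (max x 0) with hNedef
  have hZc : Continuous Z := hzc.comp_continuous hm hmem
  have hZ'c : Continuous Z' := hz'c.comp_continuous hm hmem
  have hFec : Continuous Fe := hF.comp_continuous hm hmem
  have hNec : Continuous Ne' := hN.comp_continuous hm hmem
  -- FTC for z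
  have FTC : ∀ x : ℝ, 0 ≤ x → (∫ u in (0:ℝ)..x, Z' u) = z x - 1 := by
    intro x hx
    have h1 : (∫ u in (0:ℝ)..x, Z' u) = z x - z 0 := by
      apply intervalIntegral.integral_eq_sub_of_hasDeriv_right_of_le hx
      · exact hzc.mono (Icc_subset_Ici_self)
      · intro u hu
        have : Z' u = z' u := by rw [hZ'def]; simp [hmax u hu.1.le]
        rw [this]
        exact (hz u hu.1.le).mono (fun y hy => le_of_lt (lt_of_lt_of_le hu.1 (le_of_lt hy)))
      · exact hZ'c.intervalIntegrable 0 x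
    rw [h1, hz0]
  -- θe = P, continuous primitive-like function
  set P : ℝ → ℝ := fun s => ∫ r in (0:ℝ)..s, Z (s - r) * Fe r with hPdef
  have hPc : Continuous P :=
    intervalIntegral.continuous_parametric_intervalIntegral_of_continuous
      (f := fun s r => Z (s - r) * Fe r)
      ((hZc.comp (continuous_fst.sub continuous_snd)).mul (hFec.comp continuous_snd))
      continuous_id
  set K : ℝ → ℝ := fun s => ∫ r in (0:ℝ)..s, Z' (s - r) * Fe r with hKdef
  have hKc : Continuous K :=
    intervalIntegral.continuous_parametric_intervalIntegral_of_continuous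
      (f := fun s r => Z' (s - r) * Fe r)
      ((hZ'c.comp (continuous_fst.sub continuous_snd)).mul (hFec.comp continuous_snd))
      continuous_id
  set g : ℝ → ℝ := fun s => Fe s + K s with hgdef
  have hgc : Continuous g := hFec.add hKc
  -- θ agrees with P on Ici 0
  have hθP : ∀ x ∈ Ici (0:ℝ), θ x = P x := by
    intro x hx
    rw [hθ x]
    apply intervalIntegral.integral_congr
    intro r hr
    rw [uIcc_of_le hx] at hr
    have h1 : max (x - r) 0 = x - r := hmax _ (by linarith [hr.2])
    have h2 : max r 0 = r := hmax _ hr.1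
    simp only [hZdef, hFedef, h1, h2]
  -- P is the primitive of g on Ici 0
  have hPg : ∀ x : ℝ, 0 ≤ x → P x = ∫ s in (0:ℝ)..x, g s := by
    intro x hx
    have hfub := fubini_triangle (fun s r => Z' (s - r) * Fe r)
      ((hZ'c.comp (continuous_fst.sub continuous_snd)).mul (hFec.comp continuous_snd)) hx
    have e1 : (∫ s in (0:ℝ)..x, g s) = (∫ s in (0:ℝ)..x, Fe s) + ∫ s in (0:ℝ)..x, K s :=
      intervalIntegral.integral_add (hFec.intervalIntegrable 0 x) (hKc.intervalIntegrable 0 x)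
    have e2 : (∫ s in (0:ℝ)..x, K s) = ∫ r in (0:ℝ)..x, (z (x - r) - 1) * Fe r := by
      rw [hKdef]
      simp only []
      rw [hfub]
      apply intervalIntegral.integral_congr
      intro r hr
      beta_reduce
      rw [uIcc_of_le hx] at hr
      have e3 : (∫ s in r..x, Z' (s - r) * Fe r) = (∫ s in r..x, Z' (s - r)) * Fe r :=
        intervalIntegral.integral_mul_const _ _
      have e4 : (∫ s in r..x, Z' (s - r)) = ∫ u in (0:ℝ)..(x - r), Z' u := by
        rw [intervalIntegral.integral_comp_sub_right (fun u => Z' u) r, sub_self]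
      rw [e3, e4, FTC (x - r) (by linarith [hr.2])]
    have e5 : (∫ r in (0:ℝ)..x, (z (x - r) - 1) * Fe r)
        = P x - ∫ r in (0:ℝ)..x, Fe r := by
      have e6 : (∫ r in (0:ℝ)..x, (z (x - r) - 1) * Fe r)
          = ∫ r in (0:ℝ)..x, (Z (x - r) * Fe r - Fe r) := by
        apply intervalIntegral.integral_congr
        intro r hr
        rw [uIcc_of_le hx] at hr
        have h1 : max (x - r) 0 = x - r := hmax _ (by linarith [hr.2])
        simp only [hZdef, h1]
        ring
      rw [e6]
      exact intervalIntegral.integral_sub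
        (((hZc.comp (continuous_const.sub continuous_id)).mul hFec).intervalIntegrable 0 x)
        (hFec.intervalIntegrable 0 x)
    rw [e1, e2, e5]
    ring
  refine ⟨g, hgc.continuousOn, ?_, ?_, ?_⟩
  · intro t ht
    have hder : HasDerivAt (fun u => ∫ s in (0:ℝ)..u, g s) (g t) t :=
      intervalIntegral.integral_hasDerivAt_right (hgc.intervalIntegrable 0 t)
        hgc.stronglyMeasurable.stronglyMeasurableAtFilter hgc.continuousAt
    exact hder.hasDerivWithinAt.congr
      (fun x hx => by rw [hθP x hx, hPg x hx])
      (by rw [hθP t ht, hPg t ht])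
  · rw [hθ 0, intervalIntegral.integral_same]
  · intro t ht
    have ht' : (0:ℝ) ≤ t := ht
    -- rewrite RHS integral
    have e1 : (∫ s in (0:ℝ)..t, N (t - s) * θ s)
        = ∫ s in (0:ℝ)..t, (∫ r in (0:ℝ)..s, Ne' (t - s) * Z (s - r) * Fe r) := by
      apply intervalIntegral.integral_congr
      intro s hs
      beta_reduce
      rw [uIcc_of_le ht'] at hs
      have h1 : max (t - s) 0 = t - s := hmax _ (by linarith [hs.2])
      rw [hθP s hs.1, hPdef]
      simp only [hNedef, h1]
      rw [← intervalIntegral.integral_const_mul]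
      apply intervalIntegral.integral_congr
      intro r _
      ring
    have hfub := fubini_triangle (fun s r => Ne' (t - s) * Z (s - r) * Fe r)
      (((hNec.comp (continuous_const.sub continuous_fst)).mul
        (hZc.comp (continuous_fst.sub continuous_snd))).mul (hFec.comp continuous_snd)) ht'
    have e2 : ∀ r ∈ Icc (0:ℝ) t,
        (∫ s in r..t, Ne' (t - s) * Z (s - r) * Fe r)
          = (∫ u in (0:ℝ)..(t - r), Ne' (t - r - u) * Z u) * Fe r := by
      intro r hr
      rw [intervalIntegral.integral_mul_const]
      congr 1
      have := intervalIntegral.integral_comp_sub_right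
        (fun u => Ne' (t - r - u) * Z u) r (a := r) (b := t)
      rw [sub_self] at this
      rw [← this]
      apply intervalIntegral.integral_congr
      intro s _
      beta_reduce
      have heq : t - r - (s - r) = t - s := by ring
      rw [heq]
    have e3 : ∀ r ∈ Icc (0:ℝ) t,
        Z' (t - r) = -lam ^ 2 * ∫ u in (0:ℝ)..(t - r), Ne' (t - r - u) * Z u := by
      intro r hr
      have htr : (0:ℝ) ≤ t - r := by linarith [hr.2]
      have h1 : max (t - r) 0 = t - r := hmax _ htr
      rw [hZ'def]
      simp only [h1]
      rw [hzeq (t - r) htr]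
      congr 1
      apply intervalIntegral.integral_congr
      intro u hu
      rw [uIcc_of_le htr] at hu
      have h2 : max (t - r - u) 0 = t - r - u := hmax _ (by linarith [hu.2])
      have h3 : max u 0 = u := hmax _ hu.1
      simp only [hNedef, hZdef, h2, h3]
    have e4 : K t = -lam ^ 2 * ∫ s in (0:ℝ)..t, N (t - s) * θ s := by
      rw [e1, hfub, hKdef]
      simp only []
      rw [← intervalIntegral.integral_const_mul]
      apply intervalIntegral.integral_congr
      intro r hr
      beta_reduce
      rw [uIcc_of_le ht'] at hr
      rw [e2 r hr, e3 r hr]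
      ring
    have hFet : Fe t = F t := by simp only [hFedef, hmax t ht']
    rw [hgdef]
    simp only []
    rw [e4, hFet]
    ring
end

section
/- Given a continuous function N : [0,∞) → ℝ and λ > 0, let z : [0,∞) → ℝ be continuously differentiable with z'(t) = −λ² ∫₀ᵗ N(t−s) z(s) ds and z(0) = 1. Let g : [0,∞) → ℝ be continuous, f₁(t) = ∫₀ᵗ g(s) ds, and c ∈ ℝ. Define θ(t) = −(c/λ²) ( f₁(t) − ∫₀ᵗ g(s) z(t−s) ds ). Then θ(0) = 0 and θ'(t) = −λ² ∫₀ᵗ N(t−s) θ(s) ds − c ∫₀ᵗ N(t−s) f₁(s) ds for every t ≥ 0. (Explicit solution formula for the forced modal equation arising from the boundary input f(x̂,t) = f₀(x̂) f₁(t).) -/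
/-!
Write `f ⋆ h` for `t ↦ ∫₀ᵗ f(t - s) h(s) ds` and `1` for the constant function. Integrating the
equation for `z` gives `z - 1 = -λ² (1 ⋆ N) ⋆ z`, so by associativity of `⋆` (Fubini on the
triangle `0 ≤ s ≤ τ ≤ t`) `z ⋆ g - f₁ = (z - 1) ⋆ g = -λ² · 1 ⋆ (N ⋆ (z ⋆ g))`. Hence
`θ = -c · 1 ⋆ (N ⋆ (z ⋆ g))`, whose derivative is `-c · N ⋆ (z ⋆ g) = -λ² N ⋆ θ - c · N ⋆ f₁`.
The data, given only on `[0, ∞)`, are first extended continuously to `ℝ`.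
-/

open MeasureTheory Set

theorem ContinuousOn.exists_continuous_eqOn_Ici {E : Type*} [TopologicalSpace E] {f : ℝ → E}
    {a : ℝ} (hf : ContinuousOn f (Ici a)) : ∃ g : ℝ → E, Continuous g ∧ EqOn g f (Ici a) :=
  ⟨fun x => f (max x a), hf.comp_continuous (by fun_prop) fun x => le_max_right x a,
    fun x hx => by simp only [max_eq_left (mem_Ici.1 hx)]⟩

open intervalIntegral in
theorem integral_integral_triangle_swap {E : Type*} [NormedAddCommGroup E] [NormedSpace ℝ E]
    {K : ℝ → ℝ → E} (hK : Continuous (Function.uncurry K)) {t : ℝ} (ht : 0 ≤ t) :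
    ∫ τ in (0:ℝ)..t, ∫ s in (0:ℝ)..τ, K τ s = ∫ s in (0:ℝ)..t, ∫ τ in s..t, K τ s := by
  set μ := volume.restrict (Ioc (0:ℝ) t)
  set F := {p : ℝ × ℝ | p.2 ≤ p.1}.indicator (Function.uncurry K)
  have hF : Integrable F (μ.prod μ) := by
    rw [Measure.prod_restrict, ← Measure.volume_eq_prod]
    refine IntegrableOn.indicator ?_ (measurableSet_le measurable_snd measurable_fst)
    exact (hK.continuousOn.integrableOn_compact (isCompact_Icc.prod isCompact_Icc)).mono_set
      (prod_mono Ioc_subset_Icc_self Ioc_subset_Icc_self)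
  have lhs : ∀ τ ∈ Ioc 0 t, ∫ s, F (τ, s) ∂μ = ∫ s in (0:ℝ)..τ, K τ s := by
    intro τ hτ
    have : (fun s => F (τ, s)) = (Iic τ).indicator (K τ) := by
      ext s; simp [F, indicator]
    rw [this, MeasureTheory.integral_indicator measurableSet_Iic,
      Measure.restrict_restrict measurableSet_Iic, Iic_inter_Ioc_of_le hτ.2, integral_of_le hτ.1.le]
  have rhs : ∀ s ∈ Ioc 0 t, ∫ τ, F (τ, s) ∂μ = ∫ τ in s..t, K τ s := by
    intro s hs
    have : (fun τ => F (τ, s)) = (Ici s).indicator (K · s) := by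
      ext τ; simp [F, indicator]
    have hIcc : Ici s ∩ Ioc 0 t = Icc s t := by
      ext τ; simp only [mem_inter_iff, mem_Ici, mem_Ioc, mem_Icc]; grind [hs.1]
    rw [this, MeasureTheory.integral_indicator measurableSet_Ici,
      Measure.restrict_restrict measurableSet_Ici, hIcc, integral_of_le hs.2,
      integral_Icc_eq_integral_Ioc]
  calc ∫ τ in (0:ℝ)..t, ∫ s in (0:ℝ)..τ, K τ s = ∫ τ, ∫ s, F (τ, s) ∂μ ∂μ := by
        rw [integral_of_le ht]; exact (setIntegral_congr_fun measurableSet_Ioc lhs).symm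
    _ = ∫ s, ∫ τ, F (τ, s) ∂μ ∂μ := integral_integral_swap hF
    _ = ∫ s in (0:ℝ)..t, ∫ τ in s..t, K τ s := by
        rw [integral_of_le ht]; exact setIntegral_congr_fun measurableSet_Ioc rhs

noncomputable def volterraConv (f h : ℝ → ℝ) (t : ℝ) : ℝ := ∫ s in (0:ℝ)..t, f (t - s) * h s

namespace volterraConv

variable {f g h : ℝ → ℝ}

theorem one_left (h : ℝ → ℝ) (t : ℝ) : volterraConv 1 h t = ∫ s in (0:ℝ)..t, h s := by
  simp [volterraConv]

theorem congr_Ici {f' h' : ℝ → ℝ} (hf : EqOn f f' (Ici 0)) (hh : EqOn h h' (Ici 0)) :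
    EqOn (volterraConv f h) (volterraConv f' h') (Ici 0) := by
  intro t ht
  refine intervalIntegral.integral_congr fun s hs => ?_
  rw [uIcc_of_le ht] at hs
  simp only [hf (sub_nonneg.2 hs.2), hh hs.1]

theorem smul_left (a : ℝ) (f h : ℝ → ℝ) : volterraConv (a • f) h = a • volterraConv f h := by
  ext t
  simp only [volterraConv, Pi.smul_apply, smul_eq_mul, mul_assoc,
    intervalIntegral.integral_const_mul]

theorem smul_right (a : ℝ) (f h : ℝ → ℝ) : volterraConv f (a • h) = a • volterraConv f h := by
  ext t
  simp only [volterraConv, Pi.smul_apply, smul_eq_mul, mul_left_comm _ a,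
    intervalIntegral.integral_const_mul]

theorem sub_left (hf : Continuous f) (hg : Continuous g) (hh : Continuous h) :
    volterraConv (f - g) h = volterraConv f h - volterraConv g h := by
  ext t
  simp only [volterraConv, Pi.sub_apply, sub_mul]
  exact intervalIntegral.integral_sub (Continuous.intervalIntegrable (by fun_prop) _ _)
    (Continuous.intervalIntegrable (by fun_prop) _ _)

theorem sub_right (hf : Continuous f) (hg : Continuous g) (hh : Continuous h) :
    volterraConv f (g - h) = volterraConv f g - volterraConv f h := by
  ext t
  simp only [volterraConv, Pi.sub_apply, mul_sub]
  exact intervalIntegral.integral_sub (Continuous.intervalIntegrable (by fun_prop) _ _)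
    (Continuous.intervalIntegrable (by fun_prop) _ _)

theorem _root_.Continuous.volterraConv (hf : Continuous f) (hh : Continuous h) :
    Continuous (volterraConv f h) :=
  intervalIntegral.continuous_parametric_intervalIntegral_of_continuous (by fun_prop)
    continuous_id

theorem hasDerivAt_one_left (hh : Continuous h) (t : ℝ) :
    HasDerivAt (volterraConv 1 h) (h t) t := by
  simp only [funext (one_left h)]
  exact (hh.integral_hasStrictDerivAt 0 t).hasDerivAt

theorem assoc (hf : Continuous f) (hg : Continuous g) (hh : Continuous h) {t : ℝ} (ht : 0 ≤ t) :
    volterraConv (volterraConv f g) h t = volterraConv f (volterraConv g h) t := by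
  have shift : ∀ s, ∫ τ in s..t, f (t - τ) * g (τ - s) = volterraConv f g (t - s) := by
    intro s
    have := intervalIntegral.integral_comp_sub_right (a := s) (b := t)
      (fun u => f (t - s - u) * g u) s
    simpa only [volterraConv, sub_self, sub_sub_sub_cancel_right] using this
  calc volterraConv (volterraConv f g) h t
      = ∫ s in (0:ℝ)..t, ∫ τ in s..t, f (t - τ) * (g (τ - s) * h s) := by
        rw [volterraConv]
        simp_rw [← shift, ← intervalIntegral.integral_mul_const, mul_assoc]
    _ = ∫ τ in (0:ℝ)..t, ∫ s in (0:ℝ)..τ, f (t - τ) * (g (τ - s) * h s) :=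
        (integral_integral_triangle_swap (by fun_prop) ht).symm
    _ = volterraConv f (volterraConv g h) t := by
        simp only [volterraConv, intervalIntegral.integral_const_mul]

variable {N Z Z' G : ℝ → ℝ}

theorem sub_one_eqOn_of_hasDerivWithinAt {a : ℝ} (hN : Continuous N) (hZ : Continuous Z)
    (hderiv : ∀ s ∈ Ici 0, HasDerivWithinAt Z (Z' s) (Ici 0) s) (hZ' : ContinuousOn Z' (Ici 0))
    (heq : EqOn Z' (a • volterraConv N Z) (Ici 0)) (hZ0 : Z 0 = 1) :
    EqOn (Z - 1) (a • volterraConv (volterraConv 1 N) Z) (Ici 0) := by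
  intro t (ht : 0 ≤ t)
  have ftc : ∫ s in (0:ℝ)..t, Z' s = Z t - Z 0 :=
    intervalIntegral.integral_eq_sub_of_hasDeriv_right_of_le ht hZ.continuousOn
      (fun r hr => (hderiv r hr.1.le).mono (Ioi_subset_Ici hr.1.le))
      (hZ'.mono (uIcc_of_le ht ▸ Icc_subset_Ici_self)).intervalIntegrable
  rw [Pi.sub_apply, Pi.one_apply, ← hZ0, ← ftc, ← one_left, congr_Ici (eqOn_refl _ _) heq ht,
    smul_right, Pi.smul_apply, Pi.smul_apply, assoc continuous_one hN hZ ht]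

theorem sub_volterraConv_one_eqOn {a : ℝ} (hN : Continuous N) (hZ : Continuous Z)
    (hG : Continuous G)
    (hZ1 : EqOn (Z - 1) (a • volterraConv (volterraConv 1 N) Z) (Ici 0)) :
    EqOn (volterraConv Z G - volterraConv 1 G)
      (a • volterraConv 1 (volterraConv N (volterraConv Z G))) (Ici 0) := by
  intro t (ht : 0 ≤ t)
  rw [← sub_left hZ continuous_one hG, congr_Ici hZ1 (eqOn_refl _ _) ht, smul_left,
    Pi.smul_apply, Pi.smul_apply, assoc (continuous_one.volterraConv hN) hZ hG ht,
    assoc continuous_one hN (hZ.volterraConv hG) ht]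

theorem hasDerivWithinAt_duhamel {μ : ℝ} (hμ : μ ≠ 0) (c : ℝ) (hN : Continuous N)
    (hZ : Continuous Z) (hG : Continuous G)
    (hderiv : ∀ s ∈ Ici 0, HasDerivWithinAt Z (Z' s) (Ici 0) s) (hZ' : ContinuousOn Z' (Ici 0))
    (heq : EqOn Z' ((-μ) • volterraConv N Z) (Ici 0)) (hZ0 : Z 0 = 1) {t : ℝ} (ht : 0 ≤ t) :
    HasDerivWithinAt ((-(c / μ)) • (volterraConv 1 G - volterraConv Z G))
      (-μ * volterraConv N ((-(c / μ)) • (volterraConv 1 G - volterraConv Z G)) t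
        - c * volterraConv N (volterraConv 1 G) t) (Ici 0) t := by
  have hZ1 : EqOn (Z - 1) ((-μ) • volterraConv (volterraConv 1 N) Z) (Ici 0) :=
    sub_one_eqOn_of_hasDerivWithinAt hN hZ hderiv hZ' heq hZ0
  have hΘ : EqOn ((-(c / μ)) • (volterraConv 1 G - volterraConv Z G))
      ((-c) • volterraConv 1 (volterraConv N (volterraConv Z G))) (Ici 0) := fun x hx => by
    rw [Pi.smul_apply, ← neg_sub, Pi.neg_apply, sub_volterraConv_one_eqOn hN hZ hG hZ1 hx]
    simp only [Pi.smul_apply, smul_eq_mul]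
    field_simp
  have hval : -μ * volterraConv N ((-(c / μ)) • (volterraConv 1 G - volterraConv Z G)) t
      - c * volterraConv N (volterraConv 1 G) t = -c * volterraConv N (volterraConv Z G) t := by
    rw [smul_right, sub_right hN (continuous_one.volterraConv hG) (hZ.volterraConv hG),
      Pi.smul_apply, Pi.sub_apply, smul_eq_mul]
    field_simp
    ring
  rw [hval]
  exact ((hasDerivAt_one_left (hN.volterraConv (hZ.volterraConv hG)) t).const_mul
    (-c)).hasDerivWithinAt.congr_of_mem hΘ ht

end volterraConv

/-- Explicit solution formula for the forced modal equation: with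
`z` the solution of `z'(t) = -λ² ∫₀ᵗ N(t-s) z(s) ds`, `z(0) = 1`,
`f₁(t) = ∫₀ᵗ g(s) ds` and `θ(t) = -(c/λ²)(f₁(t) - ∫₀ᵗ g(s) z(t-s) ds)`, one has
`θ(0) = 0` and `θ'(t) = -λ² ∫₀ᵗ N(t-s) θ(s) ds - c ∫₀ᵗ N(t-s) f₁(s) ds` for `t ≥ 0`. -/
theorem forced_modal_equation_solution
    (N : ℝ → ℝ) (hN : ContinuousOn N (Set.Ici 0))
    (lam : ℝ) (hlam : 0 < lam)
    (z z' : ℝ → ℝ) (hz'c : ContinuousOn z' (Set.Ici 0))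
    (hz : ∀ s ∈ Set.Ici (0:ℝ), HasDerivWithinAt z (z' s) (Set.Ici 0) s)
    (hzeq : ∀ t ∈ Set.Ici (0:ℝ),
      z' t = -lam ^ 2 * ∫ s in (0:ℝ)..t, N (t - s) * z s)
    (hz0 : z 0 = 1)
    (g : ℝ → ℝ) (hg : ContinuousOn g (Set.Ici 0))
    (f₁ : ℝ → ℝ) (hf₁ : ∀ t, f₁ t = ∫ s in (0:ℝ)..t, g s)
    (c : ℝ)
    (θ : ℝ → ℝ)
    (hθ : ∀ t, θ t = -(c / lam ^ 2) * (f₁ t - ∫ s in (0:ℝ)..t, g s * z (t - s))) :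
    θ 0 = 0 ∧
      ∀ t ∈ Set.Ici (0:ℝ),
        HasDerivWithinAt θ
          (-lam ^ 2 * (∫ s in (0:ℝ)..t, N (t - s) * θ s)
            - c * ∫ s in (0:ℝ)..t, N (t - s) * f₁ s)
          (Set.Ici 0) t := by
  obtain ⟨Ñ, hÑc, hÑ⟩ := hN.exists_continuous_eqOn_Ici
  obtain ⟨Z, hZc, hZ⟩ :=
    ContinuousOn.exists_continuous_eqOn_Ici fun s hs => (hz s hs).continuousWithinAt
  obtain ⟨G, hGc, hG⟩ := hg.exists_continuous_eqOn_Ici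
  have hf₁G : EqOn f₁ (volterraConv 1 G) (Ici 0) := fun t ht => by
    rw [hf₁, ← volterraConv.one_left, volterraConv.congr_Ici (eqOn_refl _ _) hG ht]
  have hθΘ : EqOn θ ((-(c / lam ^ 2)) • (volterraConv 1 G - volterraConv Z G)) (Ici 0) :=
    fun t ht => by
      rw [hθ, hf₁G ht, Pi.smul_apply, Pi.sub_apply, smul_eq_mul, volterraConv.congr_Ici hZ hG ht]
      simp only [volterraConv, mul_comm (g _)]
  refine ⟨by simp [hθ, hf₁], fun t ht => ?_⟩
  have hΘ := volterraConv.hasDerivWithinAt_duhamel (pow_ne_zero 2 hlam.ne') c hÑc hZc hGc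
    (fun s hs => (hz s hs).congr_of_mem hZ hs) hz'c
    (fun s hs => by
      rw [hzeq s hs, Pi.smul_apply, smul_eq_mul, volterraConv.congr_Ici hÑ hZ hs]
      rfl)
    (by rw [hZ self_mem_Ici, hz0]) ht
  rw [volterraConv.congr_Ici hÑ hθΘ.symm ht, volterraConv.congr_Ici hÑ hf₁G.symm ht] at hΘ
  exact hΘ.congr_of_mem hθΘ ht
end
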